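/- arXiv:1009.2975 — 2 statements merged into one kernel-verified Lean document; each statement's English description precedes it below -/
import Mathlib

section
/- Let (M,ω) be a 2-plectic manifold. The 2-term chain complex C^∞(M) --d--> Ω¹_Ham(M), with the bracket equal to {α,β} = ι_{v_β} ι_{v_α} ω in degree 0 and zero otherwise, and Jacobiator J(α,β,γ) = ι_{v_α} ι_{v_β} ι_{v_γ} ω, forms a Lie 2-algebra: the Jacobiator is a chain homotopy between [x,[y,z]] and [[x,y],z] + [y,[x,z]], and it satisfies the coherence identity [x,J(y,z,w)] + J(x,[y,z],w) + J(x,z,[y,w]) + [J(x,y,z),w] + [z,J(x,y,w)] = J(x,y,[z,w]) + J([x,y],z,w) + [y,J(x,z,w)] + J(y,[x,z],w) + J(y,z,[x,w]). -/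
noncomputable section

/-- An abstract Cartan calculus on a manifold: vector fields `X`, smooth functions `Ω0`,
differential forms `Ω1`–`Ω4`, points `Pt`, with exterior derivative, interior products,
evaluation at points, and the standard identities of the Cartan calculus. -/
structure CartanCalculus (X Ω0 Ω1 Ω2 Ω3 Ω4 Pt : Type*)
    [LieRing X] [LieAlgebra ℝ X]
    [CommRing Ω0] [Algebra ℝ Ω0] [Module Ω0 X]
    [AddCommGroup Ω1] [Module ℝ Ω1] [Module Ω0 Ω1]
    [AddCommGroup Ω2] [Module ℝ Ω2]
    [AddCommGroup Ω3] [Module ℝ Ω3]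
    [AddCommGroup Ω4] [Module ℝ Ω4] where
  /-- exterior derivative on functions -/
  d0 : Ω0 →ₗ[ℝ] Ω1
  d1 : Ω1 →ₗ[ℝ] Ω2
  d2 : Ω2 →ₗ[ℝ] Ω3
  d3 : Ω3 →ₗ[ℝ] Ω4
  /-- interior product of a vector field with a 1-form -/
  i1 : X → Ω1 →ₗ[ℝ] Ω0
  i2 : X → Ω2 →ₗ[ℝ] Ω1
  i3 : X → Ω3 →ₗ[ℝ] Ω2
  i4 : X → Ω4 →ₗ[ℝ] Ω3
  /-- evaluation of a function at a point -/
  ev : Pt → Ω0 →ₗ[ℝ] ℝ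
  d1_d0 : ∀ f, d1 (d0 f) = 0
  d2_d1 : ∀ α, d2 (d1 α) = 0
  d3_d2 : ∀ B, d3 (d2 B) = 0
  i_skew2 : ∀ v w B, i1 v (i2 w B) = - i1 w (i2 v B)
  i_skew3 : ∀ v w σ, i2 v (i3 w σ) = - i2 w (i3 v σ)
  i_skew4 : ∀ v w σ, i3 v (i4 w σ) = - i3 w (i4 v σ)
  /-- `ι_{[v,w]} = L_v ι_w - ι_w L_v` on 1-forms, with `L` given by Cartan's formula -/
  ibr1 : ∀ v w α, i1 ⁅v, w⁆ α =
    i1 v (d0 (i1 w α)) - i1 w (i2 v (d1 α) + d0 (i1 v α))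
  ibr2 : ∀ v w B, i2 ⁅v, w⁆ B =
    (i2 v (d1 (i2 w B)) + d0 (i1 v (i2 w B))) - i2 w (i3 v (d2 B) + d1 (i2 v B))
  ibr3 : ∀ v w σ, i3 ⁅v, w⁆ σ =
    (i3 v (d2 (i3 w σ)) + d1 (i2 v (i3 w σ))) - i3 w (i4 v (d3 σ) + d2 (i3 v σ))
  /-- a 1-form vanishing on all vector fields is zero -/
  i1_ext : ∀ α : Ω1, (∀ v, i1 v α = 0) → α = 0
  i2_ext : ∀ B : Ω2, (∀ v, i2 v B = 0) → B = 0
  d0_mul : ∀ f g, d0 (f * g) = f • d0 g + g • d0 f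
  i1_smul : ∀ (v : X) (f : Ω0) (α : Ω1), i1 v (f • α) = f * i1 v α
  i1_smulX : ∀ (f : Ω0) (v : X) (α : Ω1), i1 (f • v) α = f * i1 v α
  i2_smulX : ∀ (f : Ω0) (v : X) (B : Ω2), i2 (f • v) B = f • i2 v B
  lie_smul' : ∀ (v : X) (f : Ω0) (w : X), ⁅v, f • w⁆ = f • ⁅v, w⁆ + (i1 v (d0 f)) • w
  d0_algebraMap : ∀ r : ℝ, d0 (algebraMap ℝ Ω0 r) = 0
  ev_algebraMap : ∀ (x : Pt) (r : ℝ), ev x (algebraMap ℝ Ω0 r) = r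

namespace CartanCalculus

variable {X Ω0 Ω1 Ω2 Ω3 Ω4 Pt : Type*}
    [LieRing X] [LieAlgebra ℝ X]
    [CommRing Ω0] [Algebra ℝ Ω0] [Module Ω0 X]
    [AddCommGroup Ω1] [Module ℝ Ω1] [Module Ω0 Ω1]
    [AddCommGroup Ω2] [Module ℝ Ω2]
    [AddCommGroup Ω3] [Module ℝ Ω3]
    [AddCommGroup Ω4] [Module ℝ Ω4]
    (C : CartanCalculus X Ω0 Ω1 Ω2 Ω3 Ω4 Pt)

/-- Lie derivative of a function: `L_v f = ι_v df`. -/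
def lie0 (v : X) (f : Ω0) : Ω0 := C.i1 v (C.d0 f)

/-- Lie derivative of a 1-form via Cartan's formula: `L_v α = ι_v dα + d ι_v α`. -/
def lie1 (v : X) (α : Ω1) : Ω1 := C.i2 v (C.d1 α) + C.d0 (C.i1 v α)

/-- `α` is a Hamiltonian 1-form with Hamiltonian vector field `v`: `dα = -ι_v ω`. -/
def IsHam (ω : Ω3) (α : Ω1) (v : X) : Prop := C.d1 α = - C.i3 v ω

/-- `v` is a Hamiltonian vector field. -/
def IsHamVF (ω : Ω3) (v : X) : Prop := ∃ α : Ω1, C.IsHam ω α v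

/-- The bracket of Hamiltonian 1-forms, `{α, β} = ι_{v_β} ι_{v_α} ω`, expressed through
the Hamiltonian vector fields `v = v_α`, `w = v_β`. -/
def brkt (ω : Ω3) (v w : X) : Ω1 := C.i2 w (C.i3 v ω)

/-- `ι_u ι_v ι_w ω`. -/
def triple (ω : Ω3) (u v w : X) : Ω0 := C.i1 u (C.i2 v (C.i3 w ω))

/-- The standard symmetric pairing on sections of `TM ⊕ T*M`. -/
def pairP (e1 e2 : X × Ω1) : Ω0 := C.i1 e1.1 e2.2 + C.i1 e2.1 e1.2

/-- The standard Courant bracket on sections of `TM ⊕ T*M`. -/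
def cb (e1 e2 : X × Ω1) : X × Ω1 :=
  (⁅e1.1, e2.1⁆,
    C.lie1 e1.1 e2.2 - C.lie1 e2.1 e1.2
      - (1/2 : ℝ) • C.d0 (C.i1 e1.1 e2.2 - C.i1 e2.1 e1.2))

/-- The standard Dorfman bracket on sections of `TM ⊕ T*M`. -/
def db (e1 e2 : X × Ω1) : X × Ω1 :=
  (⁅e1.1, e2.1⁆, C.lie1 e1.1 e2.2 - C.i2 e2.1 (C.d1 e1.2))

/-- The `ω`-twisted Courant bracket. -/
def tcb (ω : Ω3) (e1 e2 : X × Ω1) : X × Ω1 :=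
  C.cb e1 e2 - ((0 : X), C.i2 e2.1 (C.i3 e1.1 ω))

/-- The `ω`-twisted Dorfman bracket. -/
def tdb (ω : Ω3) (e1 e2 : X × Ω1) : X × Ω1 :=
  C.db e1 e2 - ((0 : X), C.i2 e2.1 (C.i3 e1.1 ω))

/-- The homotopy `Φ(α,β) = -½(ι_{v_α}β - ι_{v_β}α)`. -/
def Phi (v : X) (α : Ω1) (w : X) (β : Ω1) : Ω0 :=
  -((1/2 : ℝ) • (C.i1 v β - C.i1 w α))

/-- The Jacobiator of the Courant Lie 2-algebra. -/
def Jprime (ω : Ω3) (e1 e2 e3 : X × Ω1) : Ω0 :=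
  -((1/6 : ℝ) • (C.pairP (C.tcb ω e1 e2) e3 + C.pairP (C.tcb ω e3 e1) e2
      + C.pairP (C.tcb ω e2 e3) e1))

/-- The degree-1 bracket `[e,f] = ½⟨e, df⟩₊` of the Courant Lie 2-algebra. -/
def brD1 (e : X × Ω1) (f : Ω0) : Ω0 :=
  (1/2 : ℝ) • C.pairP e ((0 : X), C.d0 f)

/-- The Lie algebroid bracket on `TM ⊕ ℝ` twisted by a 2-form `ω₂` (via the splitting
`s(v) = (v,0)`): `[(v₁,f₁),(v₂,f₂)] = ([v₁,v₂], v₁(f₂) - v₂(f₁) - ω₂(v₁,v₂))`. -/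
def abr (ω2 : Ω2) (e1 e2 : X × Ω0) : X × Ω0 :=
  (⁅e1.1, e2.1⁆,
    C.i1 e1.1 (C.d0 e2.2) - C.i1 e2.1 (C.d0 e1.2) - C.i1 e2.1 (C.i2 e1.1 ω2))

end CartanCalculus

open CartanCalculus

variable {X Ω0 Ω1 Ω2 Ω3 Ω4 Pt : Type*}
    [LieRing X] [LieAlgebra ℝ X]
    [CommRing Ω0] [Algebra ℝ Ω0] [Module Ω0 X]
    [AddCommGroup Ω1] [Module ℝ Ω1] [Module Ω0 Ω1]
    [AddCommGroup Ω2] [Module ℝ Ω2]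
    [AddCommGroup Ω3] [Module ℝ Ω3]
    [AddCommGroup Ω4] [Module ℝ Ω4]

/-!
For a Hamiltonian `v`, the 2-form `ι_v ω = -dα` is closed; together with `dω = 0`, Cartan's
formula gives `L_v ω = 0` and `ι_{[v,w]} ω = d ι_v ι_w ω`, so `{α, β}` is Hamiltonian with vector
field `[v_α, v_β]`. The homotopy identity is the formula for `ι_{[v_β,v_γ]}` on the closed 2-form
`ι_{v_α} ω`. The coherence identity is the difference of the invariance identities `L_{v_x} ω = 0`
and `L_{v_y} ω = 0`, once `ω([v_x, v_y], v_w, v_z)` is expanded by the formula for the exterior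
derivative of the Hamiltonian 1-form `{z, w}`.
-/

namespace CartanCalculus

variable (C : CartanCalculus X Ω0 Ω1 Ω2 Ω3 Ω4 Pt) {ω : Ω3}

theorem d2_i3_eq_zero_of_isHam {α : Ω1} {v : X} (h : C.IsHam ω α v) :
    C.d2 (C.i3 v ω) = 0 := by
  rw [← neg_neg (C.i3 v ω), ← h, map_neg, C.d2_d1, neg_zero]

theorem triple_neg_left (u v w : X) : C.triple ω (-u) v w = - C.triple ω u v w := by
  rw [triple, triple, ← neg_one_smul Ω0 u, C.i1_smulX, neg_one_mul]

theorem i1_brkt (u v w : X) : C.i1 u (C.brkt ω v w) = C.triple ω u w v := rfl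

theorem triple_swap_left (u v w : X) : C.triple ω u v w = - C.triple ω v u w :=
  C.i_skew2 u v _

theorem triple_swap_right (u v w : X) : C.triple ω u v w = - C.triple ω u w v := by
  rw [triple, triple, C.i_skew3, map_neg]

theorem triple_rotate (u v w : X) : C.triple ω u v w = C.triple ω v w u := by
  rw [triple_swap_left, triple_swap_right, neg_neg]

theorem i3_lie_of_closed (hcl : C.d3 ω = 0) {v w : X}
    (hv : C.d2 (C.i3 v ω) = 0) (hw : C.d2 (C.i3 w ω) = 0) :
    C.i3 ⁅v, w⁆ ω = C.d1 (C.i2 v (C.i3 w ω)) := by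
  rw [C.ibr3, hcl, hv, hw, map_zero, map_zero, zero_add, zero_add, map_zero, sub_zero]

theorem isHam_brkt (hcl : C.d3 ω = 0) {α β : Ω1} {v w : X}
    (hv : C.IsHam ω α v) (hw : C.IsHam ω β w) :
    C.IsHam ω (C.brkt ω v w) ⁅v, w⁆ := by
  rw [IsHam, brkt, C.i_skew3, map_neg,
    C.i3_lie_of_closed hcl (C.d2_i3_eq_zero_of_isHam hv) (C.d2_i3_eq_zero_of_isHam hw)]

theorem brkt_jacobi (hcl : C.d3 ω = 0) {α β γ : Ω1} {va vb vc : X}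
    (ha : C.IsHam ω α va) (hb : C.IsHam ω β vb) (hc : C.IsHam ω γ vc) :
    C.brkt ω va ⁅vb, vc⁆ - C.brkt ω ⁅va, vb⁆ vc - C.brkt ω vb ⁅va, vc⁆
      = C.d0 (C.triple ω va vb vc) := by
  have hab := C.isHam_brkt hcl ha hb
  have hac := C.isHam_brkt hcl ha hc
  have h := C.ibr2 vb vc (C.i3 va ω)
  rw [C.d2_i3_eq_zero_of_isHam ha, map_zero, zero_add] at h
  change C.brkt ω va ⁅vb, vc⁆ = (C.i2 vb (C.d1 (C.brkt ω va vc))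
    + C.d0 (C.i1 vb (C.brkt ω va vc))) - C.i2 vc (C.d1 (C.brkt ω va vb)) at h
  have hvb : C.i2 vb (C.d1 (C.brkt ω va vc)) = C.brkt ω vb ⁅va, vc⁆ := by
    rw [hac, map_neg, C.i_skew3, neg_neg, brkt]
  have hvc : C.i2 vc (C.d1 (C.brkt ω va vb)) = - C.brkt ω ⁅va, vb⁆ vc := by
    rw [hab, map_neg, brkt]
  rw [h, hvb, hvc, i1_brkt, ← triple_rotate]
  abel

/-- `L_x ω = d ι_x ω + ι_x dω = 0`, so `L_x` acts on `ω(y, z, w)` only through its arguments. -/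
theorem lie0_triple (hcl : C.d3 ω = 0) {x : X} (hx : C.d2 (C.i3 x ω) = 0) (y z w : X) :
    C.lie0 x (C.triple ω y z w)
      = C.triple ω ⁅x, y⁆ z w + C.triple ω y ⁅x, z⁆ w + C.triple ω y z ⁅x, w⁆ := by
  have hw : C.i3 ⁅x, w⁆ ω = C.i3 x (C.d2 (C.i3 w ω)) + C.d1 (C.i2 x (C.i3 w ω)) := by
    rw [C.ibr3, hcl, map_zero, hx, add_zero, map_zero, sub_zero]
  rw [triple, triple, triple, C.ibr1, C.ibr2, ← hw, lie0, triple]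
  simp only [map_sub, map_add]
  abel

theorem i1_lie_of_isHam {α : Ω1} {u : X} (h : C.IsHam ω α u) (a b : X) :
    C.i1 ⁅a, b⁆ α = C.lie0 a (C.i1 b α) - C.lie0 b (C.i1 a α) + C.triple ω b a u := by
  rw [C.ibr1, h, map_neg, map_add, map_neg, lie0, lie0, triple]
  abel

theorem triple_coherence (hcl : C.d3 ω = 0) {x y z w : Ω1} {vx vy vz vw : X}
    (hx : C.IsHam ω x vx) (hy : C.IsHam ω y vy) (hz : C.IsHam ω z vz) (hw : C.IsHam ω w vw) :
    C.triple ω vx ⁅vy, vz⁆ vw + C.triple ω vx vz ⁅vy, vw⁆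
      = C.triple ω vx vy ⁅vz, vw⁆ + C.triple ω ⁅vx, vy⁆ vz vw
        + C.triple ω vy ⁅vx, vz⁆ vw + C.triple ω vy vz ⁅vx, vw⁆ := by
  have hLx := C.lie0_triple hcl (C.d2_i3_eq_zero_of_isHam hx) vy vw vz
  have hLy := C.lie0_triple hcl (C.d2_i3_eq_zero_of_isHam hy) vx vw vz
  have hd := C.i1_lie_of_isHam (C.isHam_brkt hcl hz hw) vx vy
  rw [i1_brkt, i1_brkt, i1_brkt, C.triple_swap_left vy vx ⁅vz, vw⁆,
    C.triple_swap_right ⁅vx, vy⁆ vw vz] at hd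
  rw [C.triple_swap_right ⁅vx, vy⁆ vw vz, C.triple_swap_right vy ⁅vx, vw⁆ vz,
    C.triple_swap_right vy vw ⁅vx, vz⁆] at hLx
  rw [← lie_skew vy vx, C.triple_neg_left, C.triple_swap_right ⁅vx, vy⁆ vw vz,
    C.triple_swap_right vx ⁅vy, vw⁆ vz, C.triple_swap_right vx vw ⁅vy, vz⁆] at hLy
  linear_combination -hd - hLx + hLy

end CartanCalculus

theorem lie_two_algebra_general
    (C : CartanCalculus X Ω0 Ω1 Ω2 Ω3 Ω4 Pt) (ω : Ω3)
    (hcl : C.d3 ω = 0) :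
    (∀ (α β γ : Ω1) (vα vβ vγ : X),
      C.IsHam ω α vα → C.IsHam ω β vβ → C.IsHam ω γ vγ →
      C.brkt ω vα ⁅vβ, vγ⁆ - C.brkt ω ⁅vα, vβ⁆ vγ - C.brkt ω vβ ⁅vα, vγ⁆
        = C.d0 (C.triple ω vα vβ vγ))
    ∧
    (∀ (x y z w : Ω1) (vx vy vz vw : X),
      C.IsHam ω x vx → C.IsHam ω y vy → C.IsHam ω z vz → C.IsHam ω w vw →
      C.triple ω vx ⁅vy, vz⁆ vw + C.triple ω vx vz ⁅vy, vw⁆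
        = C.triple ω vx vy ⁅vz, vw⁆ + C.triple ω ⁅vx, vy⁆ vz vw
          + C.triple ω vy ⁅vx, vz⁆ vw + C.triple ω vy vz ⁅vx, vw⁆) :=
  ⟨fun _ _ _ _ _ _ ha hb hc => C.brkt_jacobi hcl ha hb hc,
    fun _ _ _ _ _ _ _ _ hx hy hz hw => C.triple_coherence hcl hx hy hz hw⟩

/-- The complex `C^∞(M) → Ω¹_Ham(M)` with the bracket `{α,β}` and the Jacobiator
`J(α,β,γ) = ι_{v_α}ι_{v_β}ι_{v_γ}ω` is a Lie 2-algebra: `J` is a chain homotopy from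
`[x,[y,z]]` to `[[x,y],z] + [y,[x,z]]`, and it satisfies the coherence identity
(all brackets having a degree-1 argument vanish). -/
theorem lie_two_algebra
    (C : CartanCalculus X Ω0 Ω1 Ω2 Ω3 Ω4 Pt) (ω : Ω3)
    (hcl : C.d3 ω = 0) (hnd : ∀ v : X, C.i3 v ω = 0 → v = 0) :
    (∀ (α β γ : Ω1) (vα vβ vγ : X),
      C.IsHam ω α vα → C.IsHam ω β vβ → C.IsHam ω γ vγ →
      C.brkt ω vα ⁅vβ, vγ⁆ - C.brkt ω ⁅vα, vβ⁆ vγ - C.brkt ω vβ ⁅vα, vγ⁆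
        = C.d0 (C.triple ω vα vβ vγ))
    ∧
    (∀ (x y z w : Ω1) (vx vy vz vw : X),
      C.IsHam ω x vx → C.IsHam ω y vy → C.IsHam ω z vz → C.IsHam ω w vw →
      C.triple ω vx ⁅vy, vz⁆ vw + C.triple ω vx vz ⁅vy, vw⁆
        = C.triple ω vx vy ⁅vz, vw⁆ + C.triple ω ⁅vx, vy⁆ vz vw
          + C.triple ω vy ⁅vx, vz⁆ vw + C.triple ω vy vz ⁅vx, vw⁆) :=
  lie_two_algebra_general C ω hcl

end
end

section
/- Let (M,ω) be a 2-plectic manifold and x ∈ M. Then J_x(v₁,v₂,v₃) := ω(v₁,v₂,v₃)|_x defines a 3-cocycle in the Chevalley–Eilenberg complex of the Lie algebra of Hamiltonian vector fields with values in the trivial representation ℝ: ω([v₁,v₂],v₃,·)|_x - ω([v₁,v₃],v₂,·)|_x + ω([v₂,v₃],v₁,·)|_x = 0 as the CE differential of J_x vanishes. -/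
/-!
For a Hamiltonian vector field `v` the 2-form `ι_v ω` is closed, so, `ω` being closed, Cartan's
formula gives `L_v ω = 0`. Hence `v (ω(a,b,c)) = ω([v,a],b,c) + ω(a,[v,b],c) + ω(a,b,[v,c])`,
and for Hamiltonian `v, w` also `ι_{[v,w]} ω = d ι_v ι_w ω`. Evaluating the latter for `v₃, v₄`
on `(v₁, v₂)` with `dθ(v₁,v₂) = v₁ θ(v₂) - v₂ θ(v₁) - θ([v₁,v₂])`, and expanding both derivatives
by invariance, yields the six terms of the Chevalley–Eilenberg differential, already as an
identity of functions; evaluation at `x` is linear.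
-/

noncomputable section

open CartanCalculus

variable {X Ω0 Ω1 Ω2 Ω3 Ω4 Pt : Type*}
    [LieRing X] [LieAlgebra ℝ X]
    [CommRing Ω0] [Algebra ℝ Ω0] [Module Ω0 X]
    [AddCommGroup Ω1] [Module ℝ Ω1] [Module Ω0 Ω1]
    [AddCommGroup Ω2] [Module ℝ Ω2]
    [AddCommGroup Ω3] [Module ℝ Ω3]
    [AddCommGroup Ω4] [Module ℝ Ω4]

namespace CartanCalculus

variable (C : CartanCalculus X Ω0 Ω1 Ω2 Ω3 Ω4 Pt)

def lie2 (v : X) (B : Ω2) : Ω2 := C.i3 v (C.d2 B) + C.d1 (C.i2 v B)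

def lie3 (v : X) (σ : Ω3) : Ω3 := C.i4 v (C.d3 σ) + C.d2 (C.i3 v σ)

theorem i1_lie (v w : X) (α : Ω1) :
    C.i1 ⁅v, w⁆ α = C.lie0 v (C.i1 w α) - C.i1 w (C.lie1 v α) :=
  C.ibr1 v w α

theorem i2_lie (v w : X) (B : Ω2) :
    C.i2 ⁅v, w⁆ B = C.lie1 v (C.i2 w B) - C.i2 w (C.lie2 v B) :=
  C.ibr2 v w B

theorem i3_lie (v w : X) (σ : Ω3) :
    C.i3 ⁅v, w⁆ σ = C.lie2 v (C.i3 w σ) - C.i3 w (C.lie3 v σ) :=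
  C.ibr3 v w σ

theorem i1_i2_d1 (v w : X) (α : Ω1) :
    C.i1 w (C.i2 v (C.d1 α)) = C.lie0 v (C.i1 w α) - C.lie0 w (C.i1 v α) - C.i1 ⁅v, w⁆ α := by
  rw [i1_lie, lie1, map_add]
  unfold lie0
  ring

theorem d2_i3_eq_zero_of_isHamVF {ω : Ω3} {v : X} (hv : C.IsHamVF ω v) :
    C.d2 (C.i3 v ω) = 0 := by
  obtain ⟨α, hα⟩ := hv
  have hdd := C.d2_d1 α
  rwa [show C.d1 α = -C.i3 v ω from hα, map_neg, neg_eq_zero] at hdd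

theorem lie3_eq_zero {ω : Ω3} {v : X} (hω : C.d3 ω = 0) (hv : C.d2 (C.i3 v ω) = 0) :
    C.lie3 v ω = 0 := by
  simp [lie3, hω, hv]

theorem i3_lie_eq_lie2 {ω : Ω3} {v : X} (hv : C.lie3 v ω = 0) (w : X) :
    C.i3 ⁅v, w⁆ ω = C.lie2 v (C.i3 w ω) := by
  simp [i3_lie, hv]

theorem i3_lie_eq_d1 {ω : Ω3} {v w : X} (hv : C.lie3 v ω = 0) (hw : C.d2 (C.i3 w ω) = 0) :
    C.i3 ⁅v, w⁆ ω = C.d1 (C.i2 v (C.i3 w ω)) := by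
  simp [i3_lie_eq_lie2 C hv, lie2, hw]

theorem lie0_triple_s16 {ω : Ω3} {v : X} (hv : C.lie3 v ω = 0) (a b c : X) :
    C.lie0 v (C.triple ω a b c) =
      C.triple ω ⁅v, a⁆ b c + C.triple ω a ⁅v, b⁆ c + C.triple ω a b ⁅v, c⁆ := by
  simp only [triple, i1_lie, i2_lie, i3_lie_eq_lie2 C hv, map_sub]
  abel

theorem triple_swap_left_s16 (ω : Ω3) (a b c : X) : C.triple ω a b c = -C.triple ω b a c :=
  C.i_skew2 a b _

theorem triple_swap_right_s16 (ω : Ω3) (a b c : X) : C.triple ω a b c = -C.triple ω a c b := by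
  simp only [triple, C.i_skew3 b c, map_neg]

theorem triple_rotate_s16 (ω : Ω3) (a b c : X) : C.triple ω a b c = C.triple ω c a b := by
  rw [triple_swap_right_s16, triple_swap_left_s16, neg_neg]

theorem triple_lie_cocycle {ω : Ω3} (hω : C.d3 ω = 0) {v1 v2 v3 v4 : X}
    (h1 : C.d2 (C.i3 v1 ω) = 0) (h2 : C.d2 (C.i3 v2 ω) = 0)
    (h3 : C.d2 (C.i3 v3 ω) = 0) (h4 : C.d2 (C.i3 v4 ω) = 0) :
    - C.triple ω v4 v3 ⁅v1, v2⁆ + C.triple ω v4 v2 ⁅v1, v3⁆ - C.triple ω v3 v2 ⁅v1, v4⁆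
      - C.triple ω v4 v1 ⁅v2, v3⁆ + C.triple ω v3 v1 ⁅v2, v4⁆
      - C.triple ω v2 v1 ⁅v3, v4⁆ = 0 := by
  have hd : C.triple ω v1 v2 ⁅v3, v4⁆ = C.lie0 v2 (C.triple ω v1 v3 v4)
      - C.lie0 v1 (C.triple ω v2 v3 v4) - C.triple ω ⁅v2, v1⁆ v3 v4 := by
    rw [triple, i3_lie_eq_d1 C (lie3_eq_zero C hω h3) h4, i1_i2_d1]
    rfl
  rw [lie0_triple_s16 C (lie3_eq_zero C hω h1), lie0_triple_s16 C (lie3_eq_zero C hω h2)] at hd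
  linear_combination hd - C.triple_swap_left_s16 ω v1 v2 ⁅v3, v4⁆
    - (C.triple_rotate_s16 ω ⁅v1, v2⁆ v3 v4).trans (C.triple_swap_right_s16 ω v4 ⁅v1, v2⁆ v3)
    - C.triple_rotate_s16 ω v2 ⁅v1, v3⁆ v4 - C.triple_swap_left_s16 ω v2 v3 ⁅v1, v4⁆
    + C.triple_rotate_s16 ω v1 ⁅v2, v3⁆ v4 + C.triple_swap_left_s16 ω v1 v3 ⁅v2, v4⁆

end CartanCalculus

theorem threeCocycle_general
    (C : CartanCalculus X Ω0 Ω1 Ω2 Ω3 Ω4 Pt) (ω : Ω3)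
    (hcl : C.d3 ω = 0)
    (x : Pt) :
    ∀ v1 v2 v3 v4 : X,
      C.IsHamVF ω v1 → C.IsHamVF ω v2 → C.IsHamVF ω v3 → C.IsHamVF ω v4 →
      - C.ev x (C.i1 v4 (C.i2 v3 (C.i3 ⁅v1, v2⁆ ω)))
        + C.ev x (C.i1 v4 (C.i2 v2 (C.i3 ⁅v1, v3⁆ ω)))
        - C.ev x (C.i1 v3 (C.i2 v2 (C.i3 ⁅v1, v4⁆ ω)))
        - C.ev x (C.i1 v4 (C.i2 v1 (C.i3 ⁅v2, v3⁆ ω)))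
        + C.ev x (C.i1 v3 (C.i2 v1 (C.i3 ⁅v2, v4⁆ ω)))
        - C.ev x (C.i1 v2 (C.i2 v1 (C.i3 ⁅v3, v4⁆ ω))) = 0 := by
  intro v1 v2 v3 v4 h1 h2 h3 h4
  have hcocycle := congrArg (C.ev x) <| C.triple_lie_cocycle hcl
    (C.d2_i3_eq_zero_of_isHamVF h1) (C.d2_i3_eq_zero_of_isHamVF h2)
    (C.d2_i3_eq_zero_of_isHamVF h3) (C.d2_i3_eq_zero_of_isHamVF h4)
  simpa only [triple, map_add, map_sub, map_neg, map_zero] using hcocycle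

/-- `J_x(v₁,v₂,v₃) = ω(v₁,v₂,v₃)|_x` is a Chevalley–Eilenberg 3-cocycle on the
Lie algebra of Hamiltonian vector fields: its CE differential vanishes. -/
theorem threeCocycle
    (C : CartanCalculus X Ω0 Ω1 Ω2 Ω3 Ω4 Pt) (ω : Ω3)
    (hcl : C.d3 ω = 0) (hnd : ∀ v : X, C.i3 v ω = 0 → v = 0)
    (x : Pt) :
    ∀ v1 v2 v3 v4 : X,
      C.IsHamVF ω v1 → C.IsHamVF ω v2 → C.IsHamVF ω v3 → C.IsHamVF ω v4 →
      - C.ev x (C.i1 v4 (C.i2 v3 (C.i3 ⁅v1, v2⁆ ω)))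
        + C.ev x (C.i1 v4 (C.i2 v2 (C.i3 ⁅v1, v3⁆ ω)))
        - C.ev x (C.i1 v3 (C.i2 v2 (C.i3 ⁅v1, v4⁆ ω)))
        - C.ev x (C.i1 v4 (C.i2 v1 (C.i3 ⁅v2, v3⁆ ω)))
        + C.ev x (C.i1 v3 (C.i2 v1 (C.i3 ⁅v2, v4⁆ ω)))
        - C.ev x (C.i1 v2 (C.i2 v1 (C.i3 ⁅v3, v4⁆ ω))) = 0 :=
  threeCocycle_general C ω hcl x

end
end
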